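/- arXiv:1107.5252 — 4 statements merged into one kernel-verified Lean document; each statement's English description precedes it below -/
import Mathlib

section
/- The assignments Q ↦ ΔQ (postcomposition of a monad on Set with Δ) and P ↦ P̄ (postcomposition of a relative monad on Δ with the forgetful functor U) extend to functors between the category Mon(Set) of monads on Set and the category RMon(Δ) of relative monads on Δ, and these functors form an adjunction: there is a bijection Hom_{RMon(Δ)}(ΔQ, P) ≅ Hom_{Mon(Set)}(Q, P̄), natural in Q and P, so that Δ(−) is left adjoint to (−)̄. -/
open CategoryTheory

universe u

/-- A relative monad on the functor `Δ : Set → Preord` which equips a set with the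
discrete (diagonal) preorder.  A morphism `Δ X ⟶ P Y` in `Preord` is exactly a
function `X → P Y`; the value of the substitution map is a monotone map `P X ⟶ P Y`. -/
structure RMonad : Type (u + 1) where
  obj : Type u → Type u
  ord : ∀ X : Type u, Preorder (obj X)
  unit : ∀ {X : Type u}, X → obj X
  bind : ∀ {X Y : Type u}, (X → obj Y) → obj X → obj Y
  bind_mono : ∀ {X Y : Type u} (f : X → obj Y) (a b : obj X),
      (ord X).le a b → (ord Y).le (bind f a) (bind f b)
  bind_unit : ∀ {X Y : Type u} (f : X → obj Y) (x : X), bind f (unit x) = f x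
  unit_bind : ∀ {X : Type u} (p : obj X), bind unit p = p
  bind_bind : ∀ {X Y Z : Type u} (f : X → obj Y) (g : Y → obj Z) (p : obj X),
      bind g (bind f p) = bind (fun x => bind g (f x)) p

attribute [instance] RMonad.ord

/-- A monad on the category of sets, in Kleisli (extension) form. -/
structure KMonad : Type (u + 1) where
  obj : Type u → Type u
  unit : ∀ {X : Type u}, X → obj X
  bind : ∀ {X Y : Type u}, (X → obj Y) → obj X → obj Y
  bind_unit : ∀ {X Y : Type u} (f : X → obj Y) (x : X), bind f (unit x) = f x
  unit_bind : ∀ {X : Type u} (p : obj X), bind unit p = p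
  bind_bind : ∀ {X Y Z : Type u} (f : X → obj Y) (g : Y → obj Z) (p : obj X),
      bind g (bind f p) = bind (fun x => bind g (f x)) p

/-- A morphism of relative monads on `Δ`: a family of monotone maps commuting with
units and substitution. -/
@[ext]
structure RMonadHom (P Q : RMonad.{u}) : Type (u + 1) where
  app : ∀ X : Type u, P.obj X → Q.obj X
  mono : ∀ (X : Type u) (a b : P.obj X), a ≤ b → app X a ≤ app X b
  app_unit : ∀ {X : Type u} (x : X), app X (P.unit x) = Q.unit x
  app_bind : ∀ {X Y : Type u} (f : X → P.obj Y) (p : P.obj X),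
      app Y (P.bind f p) = Q.bind (fun x => app Y (f x)) (app X p)

/-- A morphism of monads on sets. -/
@[ext]
structure KMonadHom (P Q : KMonad.{u}) : Type (u + 1) where
  app : ∀ X : Type u, P.obj X → Q.obj X
  app_unit : ∀ {X : Type u} (x : X), app X (P.unit x) = Q.unit x
  app_bind : ∀ {X Y : Type u} (f : X → P.obj Y) (p : P.obj X),
      app Y (P.bind f p) = Q.bind (fun x => app Y (f x)) (app X p)

/-- The category `RMon(Δ)` of relative monads on `Δ`. -/
instance : Category RMonad.{u} where
  Hom := RMonadHom
  id P := ⟨fun _ p => p, fun _ _ _ h => h, fun _ => rfl, fun _ _ => rfl⟩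
  comp f g := ⟨fun X p => g.app X (f.app X p),
    fun X a b h => g.mono X _ _ (f.mono X a b h),
    fun x => by simp only [f.app_unit, g.app_unit],
    fun k p => by simp only [f.app_bind, g.app_bind]⟩
  id_comp f := rfl
  comp_id f := rfl
  assoc f g h := rfl

/-- The category `Mon(Set)` of monads on sets. -/
instance : Category KMonad.{u} where
  Hom := KMonadHom
  id P := ⟨fun _ p => p, fun _ => rfl, fun _ _ => rfl⟩
  comp f g := ⟨fun X p => g.app X (f.app X p),
    fun x => by simp only [f.app_unit, g.app_unit],
    fun k p => by simp only [f.app_bind, g.app_bind]⟩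
  id_comp f := rfl
  comp_id f := rfl
  assoc f g h := rfl

/-- Postcomposition with `Δ`: a monad on sets becomes a relative monad on `Δ`, the
carriers being equipped with the discrete (diagonal) preorder. -/
def DeltaMon : KMonad.{u} ⥤ RMonad.{u} where
  obj Q :=
    { obj := Q.obj
      ord := fun X =>
        { le := fun a b => a = b
          le_refl := fun _ => rfl
          le_trans := fun _ _ _ h₁ h₂ => Eq.trans h₁ h₂ }
      unit := Q.unit
      bind := Q.bind
      bind_mono := fun f a b h => congrArg (Q.bind f) h
      bind_unit := Q.bind_unit
      unit_bind := Q.unit_bind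
      bind_bind := Q.bind_bind }
  map {P Q} f :=
    { app := f.app
      mono := fun X a b h => congrArg (f.app X) h
      app_unit := f.app_unit
      app_bind := f.app_bind }
  map_id _ := rfl
  map_comp _ _ := rfl

/-- Postcomposition with the forgetful functor `U : Preord → Set`: a relative monad
on `Δ` becomes a monad on sets (the substitution being transported along the
adjunction bijection `Hom_Preord(Δ X, P Y) ≅ Hom_Set(X, U (P Y))`). -/
def BarMon : RMonad.{u} ⥤ KMonad.{u} where
  obj P :=
    { obj := P.obj
      unit := P.unit
      bind := P.bind
      bind_unit := P.bind_unit
      unit_bind := P.unit_bind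
      bind_bind := P.bind_bind }
  map {P Q} f :=
    { app := f.app
      app_unit := f.app_unit
      app_bind := f.app_bind }
  map_id _ := rfl
  map_comp _ _ := rfl

/-! Monotonicity is automatic on a discrete preorder, so a morphism of relative monads
`ΔQ ⟶ P` is the same family of maps as a monad morphism `Q ⟶ P̄`; both functors act as the
identity on components, so naturality holds definitionally. -/

theorem deltaMon_obj_le_iff {Q : KMonad.{u}} {X : Type u} (a b : (DeltaMon.obj Q).obj X) :
    a ≤ b ↔ a = b :=
  Iff.rfl

def deltaMonHomEquiv (Q : KMonad.{u}) (P : RMonad.{u}) :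
    (DeltaMon.obj Q ⟶ P) ≃ (Q ⟶ BarMon.obj P) where
  toFun f := ⟨f.app, f.app_unit, f.app_bind⟩
  invFun g := ⟨g.app, fun _ a b h => (deltaMon_obj_le_iff a b).1 h ▸ le_rfl,
    g.app_unit, g.app_bind⟩
  left_inv _ := rfl
  right_inv _ := rfl

/-- The functors `Δ(−) : Mon(Set) → RMon(Δ)` and `(−)̄ : RMon(Δ) → Mon(Set)` form an
adjunction `Hom_{RMon(Δ)}(ΔQ, P) ≅ Hom_{Mon(Set)}(Q, P̄)`, natural in `Q` and `P`. -/
theorem deltaMon_left_adjoint_barMon : Nonempty (DeltaMon.{u} ⊣ BarMon.{u}) :=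
  ⟨Adjunction.mkOfHomEquiv
    { homEquiv := deltaMonHomEquiv
      homEquiv_naturality_left_symm := fun _ _ => rfl
      homEquiv_naturality_right := fun _ _ => rfl }⟩
end

section
/- Let h : P → Q be a morphism of relative monads on a functor F : C → D and let E be a category. For any Q-module M with codomain E, the object map c ↦ M c together with the substitution ς^{h*M}(f) := ς^M(h_d ∘ f) for f : F c → P d is a P-module h*M with codomain E (the pullback module). Moreover, the assignment M ↦ h*M, acting as the identity on the underlying families of module morphisms, is a functor h* : RMod(Q, E) → RMod(P, E). -/
open CategoryTheory Limits

universe v₁ v₂ v₃ u₁ u₂ u₃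

variable {C : Type u₁} [Category.{v₁} C] {D : Type u₂} [Category.{v₂} D]
variable {E : Type u₃} [Category.{v₃} E]

/-- A relative monad on a functor `F : C ⥤ D` (Altenkirch–Chapman–Uustalu),
given by an object map, a unit, and a substitution operation, subject to the
three relative monad laws. -/
structure RelMonad (F : C ⥤ D) where
  obj : C → D
  unit : ∀ c : C, F.obj c ⟶ obj c
  subst : ∀ {c d : C}, (F.obj c ⟶ obj d) → (obj c ⟶ obj d)
  unit_subst : ∀ {c d : C} (f : F.obj c ⟶ obj d), unit c ≫ subst f = f
  subst_unit : ∀ c : C, subst (unit c) = 𝟙 (obj c)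
  subst_subst : ∀ {c d e : C} (f : F.obj c ⟶ obj d) (g : F.obj d ⟶ obj e),
      subst f ≫ subst g = subst (f ≫ subst g)

/-- A morphism of relative monads on `F`: a family of morphisms compatible with
units and substitutions. -/
structure RelMonadHom {F : C ⥤ D} (P Q : RelMonad F) where
  app : ∀ c : C, P.obj c ⟶ Q.obj c
  app_unit : ∀ c : C, P.unit c ≫ app c = Q.unit c
  app_subst : ∀ {c d : C} (f : F.obj c ⟶ P.obj d),
      P.subst f ≫ app d = app c ≫ Q.subst (f ≫ app d)

/-- A module over a relative monad `P` on `F : C ⥤ D`, with codomain `E`: an object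
map together with a module substitution satisfying the two module laws. -/
structure RModule {F : C ⥤ D} (P : RelMonad F) (E : Type u₃) [Category.{v₃} E] where
  obj : C → E
  msubst : ∀ {c d : C}, (F.obj c ⟶ P.obj d) → (obj c ⟶ obj d)
  msubst_unit : ∀ c : C, msubst (P.unit c) = 𝟙 (obj c)
  msubst_msubst : ∀ {c d e : C} (f : F.obj c ⟶ P.obj d) (g : F.obj d ⟶ P.obj e),
      msubst f ≫ msubst g = msubst (f ≫ P.subst g)

/-- A morphism of modules over a relative monad: a family of morphisms commuting
with the module substitutions. -/
@[ext]
structure RModuleHom {F : C ⥤ D} {P : RelMonad F} (M N : RModule P E) where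
  app : ∀ c : C, M.obj c ⟶ N.obj c
  comm : ∀ {c d : C} (f : F.obj c ⟶ P.obj d),
      M.msubst f ≫ app d = app c ≫ N.msubst f

/-- The category `RMod(P, E)` of `P`-modules with codomain `E`, with pointwise
identities and composition. -/
instance {F : C ⥤ D} (P : RelMonad F) : Category (RModule P E) where
  Hom := RModuleHom
  id M := ⟨fun _ => 𝟙 _, fun f => by simp⟩
  comp f g := ⟨fun c => f.app c ≫ g.app c, fun k => by
    rw [← Category.assoc, f.comm, Category.assoc, g.comm, ← Category.assoc]⟩
  id_comp f := by apply RModuleHom.ext; funext c; simp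
  comp_id f := by apply RModuleHom.ext; funext c; simp
  assoc f g h := by apply RModuleHom.ext; funext c; simp

namespace RModule

variable {F : C ⥤ D} {P Q : RelMonad F}

def pullback (h : RelMonadHom P Q) (M : RModule Q E) : RModule P E where
  obj := M.obj
  msubst f := M.msubst (f ≫ h.app _)
  msubst_unit c := by rw [h.app_unit, M.msubst_unit]
  msubst_msubst f g := by
    rw [M.msubst_msubst, Category.assoc, ← h.app_subst, Category.assoc]

def pullbackFunctor (h : RelMonadHom P Q) : RModule Q E ⥤ RModule P E where
  obj M := M.pullback h
  map ρ := ⟨ρ.app, fun f => ρ.comm (f ≫ h.app _)⟩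

end RModule

/-- For a morphism `h : P ⟶ Q` of relative monads and a `Q`-module `M` with codomain
`E`, the object map of `M` together with the substitution `ς(f) := ς^M(h_d ∘ f)` is a
`P`-module (the pullback module `h*M`); moreover this assignment, acting as the
identity on the underlying families of module morphisms, is a functor
`h* : RMod(Q, E) → RMod(P, E)`. -/
theorem pullback_module_and_functor (F : C ⥤ D) (P Q : RelMonad F)
    (h : RelMonadHom P Q) :
    (∀ M : RModule Q E, ∃ M' : RModule P E, M'.obj = M.obj ∧
        HEq (fun (c d : C) (f : F.obj c ⟶ P.obj d) => M'.msubst f)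
            (fun (c d : C) (f : F.obj c ⟶ P.obj d) => M.msubst (f ≫ h.app d))) ∧
    (∃ G : RModule Q E ⥤ RModule P E,
        (∀ M : RModule Q E, (G.obj M).obj = M.obj ∧
          HEq (fun (c d : C) (f : F.obj c ⟶ P.obj d) => (G.obj M).msubst f)
              (fun (c d : C) (f : F.obj c ⟶ P.obj d) => M.msubst (f ≫ h.app d))) ∧
        (∀ (M N : RModule Q E) (ρ : M ⟶ N),
          HEq (fun c => (G.map ρ).app c) (fun c => ρ.app c))) :=
  ⟨fun M => ⟨M.pullback h, rfl, HEq.rfl⟩,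
    RModule.pullbackFunctor h, fun _ => ⟨rfl, HEq.rfl⟩, fun _ _ _ => HEq.rfl⟩
end

section
/- Let P be a relative monad on a functor F : C → D and let E be a category with binary products. For P-modules M and N with codomain E, the object map c ↦ M c × N c with substitution ς^{M×N}(f) := ς^M(f) × ς^N(f) is a P-module with codomain E, and it is a product of M and N in the category RMod(P, E); hence RMod(P, E) has binary products. -/
open CategoryTheory Limits

universe v₁ v₂ v₃ u₁ u₂ u₃

variable {C : Type u₁} [Category.{v₁} C] {D : Type u₂} [Category.{v₂} D]
variable {E : Type u₃} [Category.{v₃} E]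

/-- The product of two `P`-modules, for a codomain category `E` with binary products:
object map `c ↦ M c × N c` with substitution `ς^{M×N}(f) := ς^M(f) × ς^N(f)`. -/
noncomputable def prodModule [HasBinaryProducts E] {F : C ⥤ D} {P : RelMonad F}
    (M N : RModule P E) : RModule P E where
  obj c := M.obj c ⨯ N.obj c
  msubst f := prod.map (M.msubst f) (N.msubst f)
  msubst_unit c := by simp only [M.msubst_unit, N.msubst_unit]; simp
  msubst_msubst {c d e} f g := by
    simp only [prod.map_map, M.msubst_msubst, N.msubst_msubst]

/-! Products of modules are computed pointwise: since `ς^{M×N}(f)` is the product map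
`ς^M(f) × ς^N(f)`, the projections `M c × N c → M c`, `M c × N c → N c` and the pairings
`⟨α_c, β_c⟩` of module morphisms commute with substitution, and the universal property
in `RMod(P, E)` is inherited componentwise from that of `M c × N c` in `E`. -/

namespace RModule

variable {F : C ⥤ D} {P : RelMonad F}

@[simp]
lemma comp_app {L M N : RModule P E} (α : L ⟶ M) (β : M ⟶ N) (c : C) :
    RModuleHom.app (α ≫ β) c = α.app c ≫ β.app c := rfl

@[ext]
lemma hom_ext {M N : RModule P E} {α β : M ⟶ N} (h : ∀ c, α.app c = β.app c) : α = β :=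
  RModuleHom.ext (funext h)

end RModule

namespace prodModule

variable [HasBinaryProducts E] {F : C ⥤ D} {P : RelMonad F}

@[simp]
lemma obj_eq (M N : RModule P E) (c : C) : (prodModule M N).obj c = (M.obj c ⨯ N.obj c) := rfl

@[simp]
lemma msubst_eq (M N : RModule P E) {c d : C} (f : F.obj c ⟶ P.obj d) :
    (prodModule M N).msubst f = prod.map (M.msubst f) (N.msubst f) := rfl

noncomputable def fst (M N : RModule P E) : prodModule M N ⟶ M :=
  ⟨fun _ => prod.fst, fun f => by simp⟩

noncomputable def snd (M N : RModule P E) : prodModule M N ⟶ N :=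
  ⟨fun _ => prod.snd, fun f => by simp⟩

@[simp]
lemma fst_app (M N : RModule P E) (c : C) : (fst M N).app c = prod.fst := rfl

@[simp]
lemma snd_app (M N : RModule P E) (c : C) : (snd M N).app c = prod.snd := rfl

@[ext]
lemma hom_ext {L M N : RModule P E} {φ ψ : L ⟶ prodModule M N}
    (h₁ : φ ≫ fst M N = ψ ≫ fst M N) (h₂ : φ ≫ snd M N = ψ ≫ snd M N) : φ = ψ := by
  ext c
  apply prod.hom_ext
  · simpa using congrArg (RModuleHom.app · c) h₁
  · simpa using congrArg (RModuleHom.app · c) h₂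

noncomputable def lift {L M N : RModule P E} (α : L ⟶ M) (β : L ⟶ N) : L ⟶ prodModule M N :=
  ⟨fun c => prod.lift (α.app c) (β.app c), fun f => by
    change _ ≫ prod.lift _ _ = prod.lift _ _ ≫ prod.map _ _
    rw [prod.lift_map, prod.comp_lift, α.comm, β.comm]⟩

@[simp]
lemma lift_fst {L M N : RModule P E} (α : L ⟶ M) (β : L ⟶ N) : lift α β ≫ fst M N = α := by
  ext c
  exact prod.lift_fst _ _

@[simp]
lemma lift_snd {L M N : RModule P E} (α : L ⟶ M) (β : L ⟶ N) : lift α β ≫ snd M N = β := by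
  ext c
  exact prod.lift_snd _ _

noncomputable def isLimit (M N : RModule P E) :
    IsLimit (BinaryFan.mk (P := prodModule M N) (fst M N) (snd M N)) :=
  BinaryFan.isLimitMk (fun s => lift s.fst s.snd) (fun _ => lift_fst _ _) (fun _ => lift_snd _ _)
    fun _ _ hfst hsnd =>
      hom_ext (hfst.trans (lift_fst _ _).symm) (hsnd.trans (lift_snd _ _).symm)

end prodModule

/-- For `P`-modules `M` and `N` with codomain a category `E` with binary products, the
pointwise product module `M × N` (object map `c ↦ M c × N c`, substitution
`ς^M(f) × ς^N(f)`) is a product of `M` and `N` in the category `RMod(P, E)`; hence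
`RMod(P, E)` has binary products. -/
theorem prodModule_is_product [HasBinaryProducts E] (F : C ⥤ D) (P : RelMonad F) :
    (∀ M N : RModule P E,
      ∃ (p₁ : RModuleHom (prodModule M N) M) (p₂ : RModuleHom (prodModule M N) N),
        (∀ c : C, p₁.app c = prod.fst) ∧ (∀ c : C, p₂.app c = prod.snd) ∧
        Nonempty (IsLimit (BinaryFan.mk (P := prodModule M N)
          (p₁ : prodModule M N ⟶ M) (p₂ : prodModule M N ⟶ N)))) ∧
    HasBinaryProducts (RModule P E) := by
  refine ⟨fun M N => ⟨prodModule.fst M N, prodModule.snd M N, fun _ => rfl, fun _ => rfl,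
    ⟨prodModule.isLimit M N⟩⟩, ?_⟩
  have (M N : RModule P E) : HasLimit (pair M N) := ⟨⟨⟨_, prodModule.isLimit M N⟩⟩⟩
  exact hasBinaryProducts_of_hasLimit_pair _
end

section
/- Let P be a relative monad on Δ : Set → Preord. For each set X, define subst_X : P(X') × P(X) → P(X) by subst_X(y, z) := σ(default(η_X, z))(y), where default(η_X, z) : X' → P X sends the fresh element * to z and x ∈ X to η_X(x). Then the family (subst_X) is a morphism of P-modules subst^P : P̂' × P̂ → P̂, where P̂ is the tautological module of P regarded as a P-module with codomain PS, the category of preordered sets and arbitrary (not necessarily monotone) maps. -/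
open CategoryTheory

universe v₂ u u₂

/-- The functorial action of a relative monad on `Δ`. -/
def RMonad.map (P : RMonad.{u}) {X Y : Type u} (f : X → Y) : P.obj X → P.obj Y :=
  P.bind (fun x => P.unit (f x))

/-- The shifted map: for `f : Δ V → P W`, `shift f : Δ(V + {*}) → P(W + {*})` sends
the fresh element `*` to `η(*)` and `v ∈ V` to `P(i)(f v)`, `i : W → W + {*}` being
the inclusion. -/
def RMonad.shift (P : RMonad.{u}) {X Y : Type u} (f : X → P.obj Y) :
    Option X → P.obj (Option Y)
  | none => P.unit none
  | some x => P.map some (f x)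

/-- A module over a relative monad `P` on `Δ`, with codomain the category `PS` of
preordered sets and arbitrary (not necessarily monotone) maps: an object map sending
sets to preordered sets, together with a module substitution (a plain map) satisfying
the two module laws. -/
structure PSMod (P : RMonad.{u}) : Type (u + 1) where
  obj : Type u → Type u
  ord : ∀ X : Type u, Preorder (obj X)
  msubst : ∀ {X Y : Type u}, (X → P.obj Y) → obj X → obj Y
  msubst_unit : ∀ {X : Type u} (m : obj X), msubst (fun x : X => P.unit x) m = m
  msubst_msubst : ∀ {X Y Z : Type u} (f : X → P.obj Y) (g : Y → P.obj Z) (m : obj X),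
      msubst g (msubst f m) = msubst (fun x => P.bind g (f x)) m

attribute [instance] PSMod.ord

/-- A morphism of `P`-modules with codomain `PS`: a family of (not necessarily
monotone) maps commuting with the module substitutions. -/
structure PSModHom {P : RMonad.{u}} (M N : PSMod P) : Type (u + 1) where
  app : ∀ X : Type u, M.obj X → N.obj X
  comm : ∀ {X Y : Type u} (f : X → P.obj Y) (m : M.obj X),
      app Y (M.msubst f m) = N.msubst f (app X m)

/-- The tautological module of `P`, regarded as a module with codomain `PS`. -/
def tautPS (P : RMonad.{u}) : PSMod P :=
  ⟨P.obj, P.ord, P.bind, P.unit_bind, P.bind_bind⟩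

lemma RMonad.shift_unit (P : RMonad.{u}) (X : Type u) :
    P.shift (fun x : X => P.unit x) = fun x : Option X => P.unit x := by
  funext x
  cases x with
  | none => rfl
  | some x => simp [RMonad.shift, RMonad.map, P.bind_unit]

lemma RMonad.shift_bind (P : RMonad.{u}) {X Y Z : Type u} (f : X → P.obj Y)
    (g : Y → P.obj Z) :
    P.shift (fun x => P.bind g (f x)) = fun x => P.bind (P.shift g) (P.shift f x) := by
  funext x
  cases x with
  | none => simp [RMonad.shift, P.bind_unit]
  | some x => simp [RMonad.shift, RMonad.map, P.bind_bind, P.bind_unit]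

/-- The derived module: object map `V ↦ M (V + {*})`, with the substitution of `M`
precomposed with the shifted map. -/
def derivPS {P : RMonad.{u}} (M : PSMod P) : PSMod P where
  obj X := M.obj (Option X)
  ord X := M.ord (Option X)
  msubst f := M.msubst (P.shift f)
  msubst_unit m := by simp only [RMonad.shift_unit, M.msubst_unit]
  msubst_msubst f g m := by simp only [M.msubst_msubst, RMonad.shift_bind]

/-- The product of two `P`-modules with codomain `PS`, with componentwise
substitution and the product preorder. -/
def prodPS {P : RMonad.{u}} (M N : PSMod P) : PSMod P where
  obj X := M.obj X × N.obj X
  ord X := inferInstance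
  msubst f m := (M.msubst f m.1, N.msubst f m.2)
  msubst_unit m := by simp [M.msubst_unit, N.msubst_unit]
  msubst_msubst f g m := by simp [M.msubst_msubst, N.msubst_msubst]

/-- The coproduct map `default(η_X, z) : X + {*} → P X` sending the fresh element `*`
to `z` and `x ∈ X` to `η_X x`. -/
def RMonad.defaultMap (P : RMonad.{u}) {X : Type u} (z : P.obj X) : Option X → P.obj X
  | none => z
  | some x => P.unit x

namespace RMonad

variable (P : RMonad.{u})

lemma bind_map {X Y Z : Type u} (h : X → Y) (g : Y → P.obj Z) (p : P.obj X) :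
    P.bind g (P.map h p) = P.bind (g ∘ h) p := by
  simp only [RMonad.map, P.bind_bind, P.bind_unit, Function.comp_def]

lemma bind_defaultMap_shift {X Y : Type u} (f : X → P.obj Y) (z : P.obj X)
    (x : Option X) :
    P.bind (P.defaultMap (P.bind f z)) (P.shift f x) = P.bind f (P.defaultMap z x) := by
  cases x with
  | none => simp only [RMonad.shift, RMonad.defaultMap, P.bind_unit]
  | some x =>
    rw [RMonad.shift, bind_map, RMonad.defaultMap, P.bind_unit]
    exact P.unit_bind (f x)

lemma bind_defaultMap_bind_shift {X Y : Type u} (f : X → P.obj Y) (y : P.obj (Option X))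
    (z : P.obj X) :
    P.bind (P.defaultMap (P.bind f z)) (P.bind (P.shift f) y) =
      P.bind f (P.bind (P.defaultMap z) y) := by
  simp only [P.bind_bind, bind_defaultMap_shift]

def substHom : PSModHom (prodPS (derivPS (tautPS P)) (tautPS P)) (tautPS P) where
  app _ m := P.bind (P.defaultMap m.2) m.1
  comm f m := P.bind_defaultMap_bind_shift f m.1 m.2

end RMonad

/-- Substitution of one variable, `subst_X (y, z) := σ(default(η_X, z))(y)`, is a
morphism of `P`-modules `P̂' × P̂ → P̂` with codomain `PS`, the category of preordered
sets and arbitrary (not necessarily monotone) maps. -/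
theorem subst_is_module_morphism (P : RMonad.{u}) :
    ∃ h : PSModHom (prodPS (derivPS (tautPS P)) (tautPS P)) (tautPS P),
      ∀ (X : Type u) (y : P.obj (Option X)) (z : P.obj X),
        h.app X (y, z) = P.bind (P.defaultMap z) y :=
  ⟨P.substHom, fun _ _ _ => rfl⟩
end
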